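/- Let A be a commutative ring, σ ∈ A a non-zerodivisor, and R = A/(σ). Given finitely generated free A-modules X₀, X₁ with A-linear maps d₀ : X₁ → X₀ and d₁ : X₀ → X₁ satisfying d₀d₁ = σ·id and d₁d₀ = σ·id (a matrix factorisation of σ), the induced 2-periodic sequence of R-modules ··· → X̄₀ →d̄₁ X̄₁ →d̄₀ X̄₀ →d̄₁ X̄₁ → ··· (where X̄_i = X_i ⊗_A R) is an exact complex of free R-modules. -/
import Mathlib

private lemma mf_mem_iff {A : Type} [CommRing A] (σ : A) {M : Type} [AddCommGroup M]
    [Module A M] (x : M) :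
    x ∈ (Ideal.span {σ} • ⊤ : Submodule A M) ↔ ∃ m, σ • m = x := by
  rw [Submodule.ideal_span_singleton_smul]
  constructor
  · intro h
    obtain ⟨m, -, rfl⟩ := Set.mem_smul_set.mp h
    exact ⟨m, rfl⟩
  · rintro ⟨m, rfl⟩
    exact Submodule.smul_mem_pointwise_smul m σ ⊤ trivial

private lemma mf_smul_injective {A M : Type} [CommRing A] [AddCommGroup M] [Module A M]
    [Module.Free A M] {σ : A} (hσ : σ ∈ nonZeroDivisors A) {x y : M}
    (h : σ • x = σ • y) : x = y := by
  let b := Module.Free.chooseBasis A M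
  apply b.repr.injective
  ext i
  have h2 := congrArg (fun z => b.repr z i) h
  simp only [map_smul, Finsupp.smul_apply, smul_eq_mul] at h2
  exact mul_cancel_left_mem_nonZeroDivisors hσ |>.mp h2

private lemma mf_exact_aux {A : Type} [CommRing A] {σ : A} (hσ : σ ∈ nonZeroDivisors A)
    {X₀ X₁ : Type} [AddCommGroup X₀] [Module A X₀] [AddCommGroup X₁] [Module A X₁]
    [Module.Free A X₁]
    (d₀ : X₁ →ₗ[A] X₀) (d₁ : X₀ →ₗ[A] X₁)
    (h₀ : d₀ ∘ₗ d₁ = σ • LinearMap.id) (h₁ : d₁ ∘ₗ d₀ = σ • LinearMap.id)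
    (hle₁ : (Ideal.span {σ} • ⊤ : Submodule A X₀) ≤
      Submodule.comap d₁ (Ideal.span {σ} • ⊤ : Submodule A X₁))
    (hle₀ : (Ideal.span {σ} • ⊤ : Submodule A X₁) ≤
      Submodule.comap d₀ (Ideal.span {σ} • ⊤ : Submodule A X₀)) :
    Function.Exact (Submodule.mapQ _ _ d₁ hle₁) (Submodule.mapQ _ _ d₀ hle₀) := by
  intro y
  obtain ⟨x, rfl⟩ := Submodule.Quotient.mk_surjective _ y
  constructor
  · intro h
    rw [Submodule.mapQ_apply, Submodule.Quotient.mk_eq_zero] at h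
    obtain ⟨b, hb⟩ := (mf_mem_iff σ _).mp h
    have hdx : d₁ (d₀ x) = σ • x := DFunLike.congr_fun h₁ x
    have : σ • d₁ b = σ • x := by
      rw [← map_smul, hb, hdx]
    refine ⟨Submodule.Quotient.mk b, ?_⟩
    rw [Submodule.mapQ_apply, mf_smul_injective hσ this]
  · rintro ⟨z, hz⟩
    obtain ⟨w, rfl⟩ := Submodule.Quotient.mk_surjective _ z
    rw [Submodule.mapQ_apply] at hz
    rw [← hz, Submodule.mapQ_apply, Submodule.Quotient.mk_eq_zero]
    have h : d₀ (d₁ w) = σ • w := DFunLike.congr_fun h₀ w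
    rw [h]
    exact (mf_mem_iff σ _).mpr ⟨w, rfl⟩

private lemma mf_free {A : Type} [CommRing A] (σ : A) (M : Type) [AddCommGroup M]
    [Module A M] [Module.Free A M] :
    Module.Free (A ⧸ Ideal.span {σ}) (M ⧸ (Ideal.span {σ} • ⊤ : Submodule A M)) :=
  Module.Free.of_equiv
    ((TensorProduct.quotTensorEquivQuotSMul M
      (Ideal.span {σ})).extendScalarsOfSurjective Ideal.Quotient.mk_surjective)


/-- A matrix factorisation `(X₀, X₁, d₀, d₁)` of a non-zerodivisor `σ` in a commutative ring
`A` induces, after reduction modulo `σ`, a 2-periodic exact sequence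
`··· → X̄₀ → X̄₁ → X̄₀ → X̄₁ → ···` of free modules over `R = A/(σ)`. -/
theorem matrix_factorisation_two_periodic_exact
    (A : Type) [CommRing A] (σ : A) (hσ : σ ∈ nonZeroDivisors A)
    (X₀ X₁ : Type) [AddCommGroup X₀] [Module A X₀] [AddCommGroup X₁] [Module A X₁]
    [Module.Free A X₀] [Module.Finite A X₀] [Module.Free A X₁] [Module.Finite A X₁]
    (d₀ : X₁ →ₗ[A] X₀) (d₁ : X₀ →ₗ[A] X₁)
    (h₀ : d₀ ∘ₗ d₁ = σ • LinearMap.id) (h₁ : d₁ ∘ₗ d₀ = σ • LinearMap.id) :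
    Function.Exact
        (Submodule.mapQ (Ideal.span {σ} • ⊤ : Submodule A X₀)
          (Ideal.span {σ} • ⊤ : Submodule A X₁) d₁ (by
            rw [← Submodule.map_le_iff_le_comap, Submodule.map_smul'']
            exact smul_mono_right _ le_top))
        (Submodule.mapQ (Ideal.span {σ} • ⊤ : Submodule A X₁)
          (Ideal.span {σ} • ⊤ : Submodule A X₀) d₀ (by
            rw [← Submodule.map_le_iff_le_comap, Submodule.map_smul'']
            exact smul_mono_right _ le_top)) ∧
      Function.Exact
        (Submodule.mapQ (Ideal.span {σ} • ⊤ : Submodule A X₁)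
          (Ideal.span {σ} • ⊤ : Submodule A X₀) d₀ (by
            rw [← Submodule.map_le_iff_le_comap, Submodule.map_smul'']
            exact smul_mono_right _ le_top))
        (Submodule.mapQ (Ideal.span {σ} • ⊤ : Submodule A X₀)
          (Ideal.span {σ} • ⊤ : Submodule A X₁) d₁ (by
            rw [← Submodule.map_le_iff_le_comap, Submodule.map_smul'']
            exact smul_mono_right _ le_top)) ∧
      Module.Free (A ⧸ Ideal.span {σ}) (X₀ ⧸ (Ideal.span {σ} • ⊤ : Submodule A X₀)) ∧
      Module.Free (A ⧸ Ideal.span {σ}) (X₁ ⧸ (Ideal.span {σ} • ⊤ : Submodule A X₁)) := by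
  refine ⟨mf_exact_aux hσ d₀ d₁ h₀ h₁ _ _, mf_exact_aux hσ d₁ d₀ h₁ h₀ _ _,
    mf_free σ X₀, mf_free σ X₁⟩
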